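/- arXiv:2011.07489 — 2 statements merged into one kernel-verified Lean document; each statement's English description precedes it below -/
import Mathlib

section
/- Let σ₁,…,σ_N ≥ 0, w₁,…,w_N > 0 with Σ wᵢ = 1 and Σᵢ wᵢσᵢ² > 0, and let ε > 0. Then the function F(x) = (1 + (1 + (16/ε²)x²)^{1/2}) · Σᵢ wᵢ σᵢ² (1 + (1 + (16/ε²)σᵢ²x)^{1/2})^{-1} on [0,∞) has a unique fixed point x*, and x* > 0. -/
set_option maxHeartbeats 1000000


/-- Let `σ₁,…,σ_N ≥ 0`, `w₁,…,w_N > 0` with `∑ wᵢ = 1` and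
`∑ wᵢσᵢ² > 0`, and let `ε > 0`.  Then the function
`F(x) = (1 + (1 + (16/ε²)x²)^{1/2}) · ∑ᵢ wᵢσᵢ²(1 + (1 + (16/ε²)σᵢ²x)^{1/2})⁻¹`
on `[0,∞)` has a unique fixed point `x*`, and `x* > 0`. -/
theorem stmt15 (N : ℕ) (σ w : Fin N → ℝ) (hσ : ∀ i, 0 ≤ σ i) (hw : ∀ i, 0 < w i)
    (hws : ∑ i, w i = 1) (hpos : 0 < ∑ i, w i * σ i ^ 2) (ε : ℝ) (hε : 0 < ε) :
    let F : ℝ → ℝ := fun x => (1 + Real.sqrt (1 + (16 / ε ^ 2) * x ^ 2)) *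
      ∑ i, w i * σ i ^ 2 * (1 + Real.sqrt (1 + (16 / ε ^ 2) * σ i ^ 2 * x))⁻¹
    ∃ x : ℝ, 0 < x ∧ F x = x ∧ ∀ y : ℝ, 0 ≤ y → F y = y → y = x := by
  intro F
  set c : ℝ := 16 / ε ^ 2 with hcdef
  have hc : 0 < c := by positivity
  set A : ℝ → ℝ := fun x => 1 + Real.sqrt (1 + c * x ^ 2) with hAdef
  set B : ℝ → ℝ := fun x => ∑ i, w i * σ i ^ 2 *
      (1 + Real.sqrt (1 + c * σ i ^ 2 * x))⁻¹ with hBdef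
  have hAx : ∀ x, A x = 1 + Real.sqrt (1 + c * x ^ 2) := fun _ => rfl
  have hBx : ∀ x, B x = ∑ i, w i * σ i ^ 2 *
      (1 + Real.sqrt (1 + c * σ i ^ 2 * x))⁻¹ := fun _ => rfl
  have hFAB : ∀ x, F x = A x * B x := fun _ => rfl
  have hden : ∀ (i : Fin N) (x : ℝ), 0 < 1 + Real.sqrt (1 + c * σ i ^ 2 * x) := by
    intro i x; positivity
  have hApos : ∀ x, 0 < A x := by intro x; rw [hAx]; positivity
  have hA1 : ∀ x, 1 ≤ A x := by
    intro x; rw [hAx]; linarith [Real.sqrt_nonneg (1 + c * x ^ 2)]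
  clear_value F A B c
  obtain ⟨j, hj⟩ : ∃ i, (0:ℝ) < w i * σ i ^ 2 := by
    by_contra h
    push_neg at h
    have : ∑ i, w i * σ i ^ 2 ≤ 0 := Finset.sum_nonpos fun i _ => h i
    linarith
  have hBpos : ∀ x, 0 < B x := by
    intro x
    rw [hBx]
    refine Finset.sum_pos' (fun i _ => ?_) ⟨j, Finset.mem_univ j, ?_⟩
    · exact mul_nonneg (mul_nonneg (hw i).le (sq_nonneg _)) (inv_nonneg.mpr (hden i x).le)
    · exact mul_pos hj (inv_pos.mpr (hden j x))
  have hBmono : ∀ a b : ℝ, a ≤ b → B b ≤ B a := by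
    intro a b hab
    rw [hBx, hBx]
    refine Finset.sum_le_sum fun i _ => ?_
    have h1 : 1 + Real.sqrt (1 + c * σ i ^ 2 * a) ≤ 1 + Real.sqrt (1 + c * σ i ^ 2 * b) := by
      have : c * σ i ^ 2 * a ≤ c * σ i ^ 2 * b :=
        mul_le_mul_of_nonneg_left hab (by positivity)
      have := Real.sqrt_le_sqrt (by linarith : 1 + c * σ i ^ 2 * a ≤ 1 + c * σ i ^ 2 * b)
      linarith
    exact mul_le_mul_of_nonneg_left (inv_anti₀ (hden i a) h1)
      (mul_nonneg (hw i).le (sq_nonneg _))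
  have hAkey : ∀ a b : ℝ, 0 ≤ a → a < b → a * A b < b * A a := by
    intro a b ha hab
    have hb : 0 < b := lt_of_le_of_lt ha hab
    have h1 : a * Real.sqrt (1 + c * b ^ 2) ≤ b * Real.sqrt (1 + c * a ^ 2) := by
      have e1 : Real.sqrt (a ^ 2 * (1 + c * b ^ 2)) = a * Real.sqrt (1 + c * b ^ 2) := by
        rw [Real.sqrt_mul (sq_nonneg a), Real.sqrt_sq ha]
      have e2 : Real.sqrt (b ^ 2 * (1 + c * a ^ 2)) = b * Real.sqrt (1 + c * a ^ 2) := by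
        rw [Real.sqrt_mul (sq_nonneg b), Real.sqrt_sq hb.le]
      rw [← e1, ← e2]
      apply Real.sqrt_le_sqrt
      nlinarith [sq_nonneg a, sq_nonneg b, hc.le]
    rw [hAx, hAx]
    nlinarith
  have key : ∀ a b : ℝ, 0 < a → a < b → a * F b < b * F a := by
    intro a b ha hab
    rw [hFAB, hFAB]
    have h1 : a * (A b * B b) ≤ a * (A b * B a) :=
      mul_le_mul_of_nonneg_left
        (mul_le_mul_of_nonneg_left (hBmono a b hab.le) (hApos b).le) ha.le
    have h2 : a * (A b * B a) < b * (A a * B a) := by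
      calc a * (A b * B a) = (a * A b) * B a := by ring
        _ < (b * A a) * B a := mul_lt_mul_of_pos_right (hAkey a b ha.le hab) (hBpos a)
        _ = b * (A a * B a) := by ring
    linarith
  -- F 0 = ∑ w σ²
  have hF0 : F 0 = ∑ i, w i * σ i ^ 2 := by
    rw [hFAB, hAx, hBx]
    have e : ∀ i : Fin N, w i * σ i ^ 2 * (1 + Real.sqrt (1 + c * σ i ^ 2 * 0))⁻¹
        = w i * σ i ^ 2 * 2⁻¹ := by
      intro i
      rw [mul_zero, add_zero, Real.sqrt_one]
      norm_num
    rw [Finset.sum_congr rfl fun i _ => e i, ← Finset.sum_mul]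
    have : Real.sqrt (1 + c * 0 ^ 2) = 1 := by
      rw [show (1:ℝ) + c * 0 ^ 2 = 1 by ring, Real.sqrt_one]
    rw [this]
    ring
  -- continuity
  have hFcont : Continuous F := by
    have hFeq : F = fun x => A x * B x := funext hFAB
    rw [hFeq, hAdef, hBdef]
    apply Continuous.mul
    · exact continuous_const.add (Real.continuous_sqrt.comp
        (continuous_const.add (continuous_const.mul (continuous_pow 2))))
    · apply continuous_finset_sum
      intro i _
      exact continuous_const.mul
        ((continuous_const.add (Real.continuous_sqrt.comp
          (continuous_const.add (continuous_const.mul continuous_id)))).inv₀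
          fun x => (hden i x).ne')
  -- small point δ with δ < F δ
  have hm : 0 < B 1 := hBpos 1
  set δ := min 1 (B 1 / 2) with hδdef
  have hδpos : 0 < δ := lt_min one_pos (by linarith)
  have hδ1 : δ ≤ 1 := min_le_left _ _
  have hFδ : δ < F δ := by
    rw [hFAB]
    calc δ ≤ B 1 / 2 := min_le_right _ _
      _ < B 1 := by linarith
      _ ≤ B δ := hBmono δ 1 hδ1
      _ ≤ A δ * B δ := le_mul_of_one_le_left (hBpos δ).le (hA1 δ)
  clear_value δ
  -- large point M with F M < M
  set S₁ := ∑ i, w i * σ i with hS₁def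
  have hS₁ : 0 ≤ S₁ := Finset.sum_nonneg fun i _ => mul_nonneg (hw i).le (hσ i)
  set r := Real.sqrt c with hrdef
  have hr : 0 < r := Real.sqrt_pos.mpr hc
  have hr2 : r ^ 2 = c := Real.sq_sqrt hc.le
  clear_value S₁ r
  set q := max (S₁ + 1) (2 * S₁ / r + 1) with hqdef
  have hqS : S₁ + 1 ≤ q := le_max_left _ _
  have hq2 : 2 * S₁ / r + 1 ≤ q := le_max_right _ _
  have hq1 : 1 ≤ q := le_trans (by linarith) hqS
  have hq : 0 < q := by linarith
  clear_value q
  set M := q ^ 2 with hMdef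
  have hM1 : 1 ≤ M := by rw [hMdef]; nlinarith
  clear_value M
  have hMpos : 0 < M := by linarith
  have hδM : δ ≤ M := le_trans hδ1 hM1
  have hrq : 0 < r * q := mul_pos hr hq
  have hAM : A M ≤ 2 + r * M := by
    rw [hAx]
    have h1 : Real.sqrt (1 + c * M ^ 2) ≤ 1 + r * M := by
      rw [show (1:ℝ) + r * M = Real.sqrt ((1 + r * M) ^ 2) from
        (Real.sqrt_sq (by nlinarith [mul_pos hr hMpos])).symm]
      apply Real.sqrt_le_sqrt
      nlinarith [hr2, mul_pos hr hMpos]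
    linarith
  have hBM : B M ≤ S₁ * (r * q)⁻¹ := by
    rw [hBx, hS₁def, Finset.sum_mul]
    refine Finset.sum_le_sum fun i _ => ?_
    rcases (hσ i).eq_or_lt with h0 | h0
    · rw [← h0]; simp
    · have hd := hden i M
      have hdle : σ i * (r * q) ≤ 1 + Real.sqrt (1 + c * σ i ^ 2 * M) := by
        have e1 : σ i * (r * q) = Real.sqrt (σ i ^ 2 * (c * M)) := by
          rw [Real.sqrt_mul (sq_nonneg _), Real.sqrt_sq (hσ i), hMdef,
            Real.sqrt_mul hc.le, Real.sqrt_sq hq.le, hrdef]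
        have e2 : Real.sqrt (σ i ^ 2 * (c * M)) ≤ Real.sqrt (1 + c * σ i ^ 2 * M) :=
          Real.sqrt_le_sqrt (by nlinarith)
        have := Real.sqrt_nonneg (1 + c * σ i ^ 2 * M)
        linarith [e1 ▸ e2]
      have h3 : σ i / (1 + Real.sqrt (1 + c * σ i ^ 2 * M)) ≤ 1 / (r * q) :=
        (div_le_div_iff₀ hd hrq).mpr (by linarith)
      rw [div_eq_mul_inv, one_div] at h3
      calc w i * σ i ^ 2 * (1 + Real.sqrt (1 + c * σ i ^ 2 * M))⁻¹
          = w i * σ i * (σ i * (1 + Real.sqrt (1 + c * σ i ^ 2 * M))⁻¹) := by ring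
        _ ≤ w i * σ i * (r * q)⁻¹ :=
            mul_le_mul_of_nonneg_left h3 (mul_nonneg (hw i).le (hσ i))
  have h3 : 2 * S₁ < r * q := by
    have h4 : 2 * S₁ / r ≤ q - 1 := by linarith
    have h5 : 2 * S₁ ≤ (q - 1) * r := (div_le_iff₀ hr).mp h4
    nlinarith
  have hkey : (2 + r * M) * (S₁ * (r * q)⁻¹) < M := by
    have e : (2 + r * M) * (S₁ * (r * q)⁻¹) = ((2 + r * M) * S₁) / (r * q) := by
      field_simp
    rw [e, div_lt_iff₀ hrq, hMdef]
    have e1 : r * q ^ 2 ≤ r * q ^ 2 * (q - S₁) :=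
      le_mul_of_one_le_right (mul_nonneg hr.le (sq_nonneg q)) (by linarith)
    have e2 : r * q ≤ r * q ^ 2 := by nlinarith
    nlinarith
  have hFM : F M < M := by
    rw [hFAB]
    calc A M * B M ≤ (2 + r * M) * B M :=
        mul_le_mul_of_nonneg_right hAM (hBpos M).le
      _ ≤ (2 + r * M) * (S₁ * (r * q)⁻¹) :=
        mul_le_mul_of_nonneg_left hBM (by nlinarith [mul_pos hr hMpos])
      _ < M := hkey
  -- IVT
  have hcont : ContinuousOn (fun x => F x - x) (Set.Icc δ M) :=
    (hFcont.sub continuous_id).continuousOn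
  have hmem : (0:ℝ) ∈ Set.Icc (F M - M) (F δ - δ) := ⟨by linarith, by linarith⟩
  obtain ⟨x, hxmem, hx⟩ := intermediate_value_Icc' hδM hcont hmem
  have hxfix : F x = x := by linarith [show F x - x = 0 from hx]
  have hxpos : 0 < x := lt_of_lt_of_le hδpos hxmem.1
  refine ⟨x, hxpos, hxfix, ?_⟩
  intro y hy hyfix
  have hy0 : 0 < y := by
    rcases hy.eq_or_lt with h | h
    · exfalso
      rw [← h] at hyfix
      rw [hF0] at hyfix
      linarith
    · exact h
  rcases lt_trichotomy y x with h | h | h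
  · exfalso
    have := key y x hy0 h
    rw [hyfix, hxfix, mul_comm] at this
    exact lt_irrefl _ this
  · exact h
  · exfalso
    have := key x y hxpos h
    rw [hyfix, hxfix, mul_comm] at this
    exact lt_irrefl _ this
end

section
/- Let C₁,…,C_N be positive semidefinite self-adjoint bounded operators on a Hilbert space H, w₁,…,w_N > 0 with Σ wᵢ = 1, and let u ∈ H with ‖u‖ = 1 satisfy Σᵢ wᵢ ⟨u, Cᵢu⟩^{1/2} > 0. Set x_u = (Σᵢ wᵢ ⟨u, Cᵢu⟩^{1/2})² and X_u = x_u (u⊗u). Then X_u is a fixed point of the map G(X) = Σᵢ wᵢ (X^{1/2} Cᵢ X^{1/2})^{1/2}, i.e. G(X_u) = X_u; moreover X = 0 is also a fixed point of G. -/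
/-!
If `Y ≥ 0` and `Y² = c P` for the rank-one projection `P = u ⊗ u`, then
`‖Y(1 - P)‖² = ‖(1 - P) Y² (1 - P)‖ = 0` by the C⋆-identity, so `Y = Y P = P Y` and hence
`Y = P Y P = ⟪u, Y u⟫ P` with `⟪u, Y u⟫ = √c`. Thus, with `s = ∑ wᵢ √⟪u, Cᵢ u⟫`, the root of
`X_u` is `s P`, `(s P) Cᵢ (s P) = s² ⟪u, Cᵢ u⟫ P` has root `s √⟪u, Cᵢ u⟫ P`, and these add up
with the weights `wᵢ` to `s² P = X_u`.
-/

open ContinuousLinearMap InnerProductSpace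

lemma IsSelfAdjoint.mul_mul_eq_self_of_mul_self_mul_eq {R : Type*} [NormedRing R] [StarRing R]
    [CStarRing R] {a p : R} (ha : IsSelfAdjoint a) (hp : IsStarProjection p)
    (h : a * a * p = a * a) : p * a * p = a := by
  have hq : a * (1 - p) = 0 := by
    rw [← CStarRing.star_mul_self_eq_zero_iff, star_mul, ha.star_eq,
      hp.one_sub.isSelfAdjoint.star_eq, mul_assoc, ← mul_assoc a, mul_sub, mul_one, h, sub_self,
      mul_zero]
  have hr : a * p = a := by rwa [mul_sub, mul_one, sub_eq_zero, eq_comm] at hq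
  have hl : p * a = a := by
    simpa only [star_mul, ha.star_eq, hp.isSelfAdjoint.star_eq] using congrArg star hr
  rw [mul_assoc, hr, hl]

namespace ContinuousLinearMap

section RCLike

variable {𝕜 E : Type*} [RCLike 𝕜] [NormedAddCommGroup E] [InnerProductSpace 𝕜 E]

lemma rankOne_self_comp_comp_rankOne_self (u : E) (A : E →L[𝕜] E) :
    rankOne 𝕜 u u ∘L A ∘L rankOne 𝕜 u u = inner 𝕜 u (A u) • rankOne 𝕜 u u := by
  rw [comp_rankOne, rankOne_comp_rankOne]

variable [CompleteSpace E]

lemma IsPositive.eq_inner_smul_rankOne_of_comp_self_eq {u : E} (hu : ‖u‖ = 1)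
    {Y : E →L[𝕜] E} (hY : Y.IsPositive) {c : 𝕜} (hc : Y ∘L Y = c • rankOne 𝕜 u u) :
    Y = inner 𝕜 u (Y u) • rankOne 𝕜 u u := by
  have hP := isStarProjection_rankOne_self (𝕜 := 𝕜) hu
  rw [← rankOne_self_comp_comp_rankOne_self]
  refine (hY.isSelfAdjoint.mul_mul_eq_self_of_mul_self_mul_eq hP ?_).symm
  rw [mul_def, mul_def, hc, smul_comp, ← mul_def, hP.isIdempotentElem.eq]

lemma IsPositive.eq_zero_of_comp_self_eq_zero {Y : E →L[𝕜] E} (hY : Y.IsPositive)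
    (h : Y ∘L Y = 0) : Y = 0 :=
  (CStarRing.star_mul_self_eq_zero_iff Y).1 (by rwa [hY.isSelfAdjoint.star_eq])

end RCLike

lemma IsPositive.eq_sqrt_smul_rankOne_of_comp_self_eq {E : Type*} [NormedAddCommGroup E]
    [InnerProductSpace ℝ E] [CompleteSpace E] {u : E} (hu : ‖u‖ = 1)
    {Y : E →L[ℝ] E} (hY : Y.IsPositive) {c : ℝ} (hc : Y ∘L Y = c • rankOne ℝ u u) :
    Y = √c • rankOne ℝ u u := by
  have hYt := hY.eq_inner_smul_rankOne_of_comp_self_eq hu hc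
  set t := inner ℝ u (Y u)
  have hu0 : u ≠ 0 := ne_zero_of_norm_ne_zero (by simp [hu])
  have htc : t ^ 2 = c := by
    refine smul_left_injective ℝ (rankOne_ne_zero (𝕜 := ℝ) hu0 hu0) ?_
    show t ^ 2 • rankOne ℝ u u = c • rankOne ℝ u u
    rw [← hc, hYt, smul_comp, comp_smul, smul_smul, ← mul_def,
      (isIdempotentElem_rankOne_self hu).eq, sq]
  rw [hYt, ← htc, Real.sqrt_sq (hY.inner_nonneg_right u)]

end ContinuousLinearMap

theorem stmt16_general {H : Type*} [NormedAddCommGroup H] [InnerProductSpace ℝ H] [CompleteSpace H]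
    (N : ℕ) (C : Fin N → H →L[ℝ] H) (w : Fin N → ℝ)
    (u : H) (hu : ‖u‖ = 1)
    (hpos : 0 < ∑ i, w i * Real.sqrt (inner ℝ u ((C i) u) : ℝ)) :
    let P : H →L[ℝ] H := (innerSL ℝ u).smulRight u
    let xu : ℝ := (∑ i, w i * Real.sqrt (inner ℝ u ((C i) u) : ℝ)) ^ 2
    (∀ Y : H →L[ℝ] H, Y.IsPositive → Y ∘L Y = xu • P →
      ∀ Z : Fin N → H →L[ℝ] H, (∀ i, (Z i).IsPositive) →
        (∀ i, (Z i) ∘L (Z i) = Y ∘L (C i) ∘L Y) →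
        ∑ i, w i • Z i = xu • P) ∧
    (∀ Y : H →L[ℝ] H, Y.IsPositive → Y ∘L Y = 0 →
      ∀ Z : Fin N → H →L[ℝ] H, (∀ i, (Z i).IsPositive) →
        (∀ i, (Z i) ∘L (Z i) = Y ∘L (C i) ∘L Y) →
        ∑ i, w i • Z i = 0) := by
  intro P xu
  have hP : rankOne ℝ u u = P := rankOne_def u u
  set s := ∑ i, w i * √(inner ℝ u (C i u))
  refine ⟨fun Y hY hY2 Z hZ hZ2 => ?_, fun Y hY hY2 Z hZ hZ2 => ?_⟩
  · have hYs : Y = s • P := by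
      rw [hY.eq_sqrt_smul_rankOne_of_comp_self_eq hu hY2, Real.sqrt_sq hpos.le, hP]
    have hZs (i : Fin N) : Z i = (s * √(inner ℝ u (C i u))) • P := by
      have hZ2' : Z i ∘L Z i = (s ^ 2 * inner ℝ u (C i u)) • rankOne ℝ u u := by
        rw [hZ2, hYs, ← hP, mul_smul, ← rankOne_self_comp_comp_rankOne_self]
        simp only [smul_comp, comp_smul, smul_smul, sq]
      rw [(hZ i).eq_sqrt_smul_rankOne_of_comp_self_eq hu hZ2', Real.sqrt_mul (sq_nonneg s),
        Real.sqrt_sq hpos.le, hP]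
    simp only [hZs, smul_smul, ← Finset.sum_smul, mul_left_comm (w _) s, ← Finset.mul_sum]
    exact congrArg (· • P) (sq s).symm
  · have hY0 := hY.eq_zero_of_comp_self_eq_zero hY2
    have hZ0 (i : Fin N) : Z i = 0 := (hZ i).eq_zero_of_comp_self_eq_zero (by simp [hZ2, hY0])
    simp [hZ0]

/-- Let `C₁,…,C_N` be positive self-adjoint bounded operators on a
Hilbert space `H`, `w₁,…,w_N > 0` with `∑ wᵢ = 1`, and `u ∈ H` with `‖u‖ = 1` satisfying
`∑ᵢ wᵢ⟨u, Cᵢu⟩^{1/2} > 0`.  With `x_u = (∑ᵢ wᵢ⟨u, Cᵢu⟩^{1/2})²` and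
`X_u = x_u (u⊗u)`, `X_u` is a fixed point of `G(X) = ∑ᵢ wᵢ (X^{1/2} Cᵢ X^{1/2})^{1/2}`,
and `X = 0` is also a fixed point of `G`.  The square roots (of `X_u`, of `0`, and of
`X^{1/2} Cᵢ X^{1/2}`) are represented as the unique positive operators with the
corresponding squares. -/
theorem stmt16 {H : Type*} [NormedAddCommGroup H] [InnerProductSpace ℝ H] [CompleteSpace H]
    (N : ℕ) (C : Fin N → H →L[ℝ] H) (w : Fin N → ℝ)
    (hC : ∀ i, (C i).IsPositive) (hw : ∀ i, 0 < w i) (hws : ∑ i, w i = 1)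
    (u : H) (hu : ‖u‖ = 1)
    (hpos : 0 < ∑ i, w i * Real.sqrt (inner ℝ u ((C i) u) : ℝ)) :
    let P : H →L[ℝ] H := (innerSL ℝ u).smulRight u
    let xu : ℝ := (∑ i, w i * Real.sqrt (inner ℝ u ((C i) u) : ℝ)) ^ 2
    (∀ Y : H →L[ℝ] H, Y.IsPositive → Y ∘L Y = xu • P →
      ∀ Z : Fin N → H →L[ℝ] H, (∀ i, (Z i).IsPositive) →
        (∀ i, (Z i) ∘L (Z i) = Y ∘L (C i) ∘L Y) →
        ∑ i, w i • Z i = xu • P) ∧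
    (∀ Y : H →L[ℝ] H, Y.IsPositive → Y ∘L Y = 0 →
      ∀ Z : Fin N → H →L[ℝ] H, (∀ i, (Z i).IsPositive) →
        (∀ i, (Z i) ∘L (Z i) = Y ∘L (C i) ∘L Y) →
        ∑ i, w i • Z i = 0) :=
  stmt16_general N C w u hu hpos
end
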